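/- Let K be a compact Hausdorff space and suppose ℓ₁ embeds almost isometrically into C(K), i.e., for every ε > 0 there exists a map f : ℓ₁ → C(K) with ‖x − y‖₁/(1+ε) ≤ ‖f(x) − f(y)‖_∞ ≤ ‖x − y‖₁ for all x, y ∈ ℓ₁. Then for every n ∈ ℕ, ℓ₁ embeds almost isometrically into C(K^(n)), where K^(n) is the n-th iterated derived set of K with the subspace topology. -/

import Mathlib

/-- The `n`-th iterated derived set of a topological space `K`, taken inside `K`:
`K^(0) = K` and `K^(n+1)` is the set of accumulation points of `K^(n)` in `K`. -/
def iteratedDerivedSet (K : Type*) [TopologicalSpace K] : ℕ → Set K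
  | 0 => Set.univ
  | n + 1 => derivedSet (iteratedDerivedSet K n)

lemma isClosed_iteratedDerivedSet (K : Type*) [TopologicalSpace K] [T1Space K] (n : ℕ) :
    IsClosed (iteratedDerivedSet K n) := by
  cases n with
  | zero => exact isClosed_univ
  | succ n => exact isClosed_derivedSet _

noncomputable instance iteratedDerivedSetCompact (K : Type*) [TopologicalSpace K]
    [T1Space K] [CompactSpace K] (n : ℕ) : CompactSpace (iteratedDerivedSet K n) :=
  isCompact_iff_compactSpace.mp ((isClosed_iteratedDerivedSet K n).isCompact)

/-!
Let `f : ℓ¹ → C(A)` be `(1 + ε)`-almost isometric, `x ≠ y` and `d = ‖x - y‖`. It suffices that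
the closed set `T` of points where `|f x - f y| ≥ (1 - 7ε) d` is infinite: it then accumulates at
a point of `A'`, so restricting `f` to `A'` loses almost nothing.

If `T` were finite, only finitely many 1-Lipschitz functionals `φ = ±f(·)(k)` could almost norm
`x - y`. For coordinates `a ≠ b` where `x - y` is small, put `p = (d/2) eₐ`, `q = (d/2) e_b`;
then `‖(x + p - q) - (y - p + q)‖ ≈ 3d`, so some `φ` rises by almost `3d` from `y - p + q` to
`x + p - q`, hence almost maximally along each leg of the path through `x - q`, `x`, `y`,
`y - p`. Pigeonholing these finitely many `φ` over infinitely many coordinates yields one `φ`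
rising by almost `d/2` from `x` to `x - q`, by almost `d` from `y` to `x` and by almost `d/2`
from `y - q` to `y`: by almost `2d` between two points at distance `d`.
-/

open Set Filter

local notation "ℓ¹" => lp (fun _ : ℕ => ℝ) 1

theorem LipschitzWith.sub_le_norm_sub {E : Type*} [SeminormedAddCommGroup E] {φ : E → ℝ}
    (hφ : LipschitzWith 1 φ) (u v : E) : φ u - φ v ≤ ‖u - v‖ := by
  have := hφ.le_add_mul u v
  rw [NNReal.coe_one, one_mul, dist_eq_norm] at this
  linarith

theorem LipschitzWith.almost_maximal_steps {E : Type*} [SeminormedAddCommGroup E] {φ : E → ℝ}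
    (hφ : LipschitzWith 1 φ) {x y p q : E} {η : ℝ}
    (h : ‖x - y‖ + 2 * (‖p‖ + ‖q‖) - η ≤ φ (x + p - q) - φ (y - p + q)) :
    ‖x - y‖ - η ≤ φ x - φ y ∧ ‖q‖ - η ≤ φ (x - q) - φ x ∧ ‖p‖ - η ≤ φ y - φ (y - p) := by
  have h₁ : φ (x + p - q) - φ (x - q) ≤ ‖p‖ := by
    simpa using hφ.sub_le_norm_sub (x + p - q) (x - q)
  have h₂ : φ (x - q) - φ x ≤ ‖q‖ := by simpa using hφ.sub_le_norm_sub (x - q) x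
  have h₃ := hφ.sub_le_norm_sub x y
  have h₄ : φ y - φ (y - p) ≤ ‖p‖ := by simpa using hφ.sub_le_norm_sub y (y - p)
  have h₅ : φ (y - p) - φ (y - p + q) ≤ ‖q‖ := by
    simpa using hφ.sub_le_norm_sub (y - p) (y - p + q)
  exact ⟨by linarith, by linarith, by linarith⟩

theorem ell1_norm_add_single (w : ℓ¹) (a : ℕ) (s : ℝ) :
    ‖w + lp.single 1 a s‖ = ‖w‖ - |w a| + |w a + s| := by
  have hp : 0 < (1 : ENNReal).toReal := by norm_num
  have key := ((lp.hasSum_norm hp (w + lp.single 1 a s)).sub (lp.hasSum_norm hp w)).unique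
    (hasSum_single a fun j hj => by simp [Pi.single_eq_of_ne hj])
  simp only [ENNReal.toReal_one, Real.rpow_one, Real.norm_eq_abs, lp.coeFn_add, Pi.add_apply,
    lp.single_apply, Pi.single_eq_same] at key
  linarith

theorem ell1_le_norm_add_single_add_single (w : ℓ¹) {a b : ℕ} (hab : a ≠ b) (s r : ℝ) :
    ‖w‖ + |s| + |r| - 2 * (|w a| + |w b|) ≤ ‖w + lp.single 1 a s + lp.single 1 b r‖ := by
  have hwb : ((w + lp.single 1 a s : ℓ¹) : ℕ → ℝ) b = w b := by
    simp [Pi.single_eq_of_ne hab.symm]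
  rw [ell1_norm_add_single, ell1_norm_add_single, hwb]
  have hs : |s| - |w a| ≤ |w a + s| := by
    simpa [add_comm] using abs_sub_abs_le_abs_sub s (-w a)
  have hr : |r| - |w b| ≤ |w b + r| := by
    simpa [add_comm] using abs_sub_abs_le_abs_sub r (-w b)
  linarith

section AlmostNorming

variable {ι : Type*} {φ : ι → ℓ¹ → ℝ} {ε : ℝ}

theorem exists_almost_maximal_steps (hφ : ∀ i, LipschitzWith 1 (φ i)) (hε : 0 ≤ ε)
    (hnorm : ∀ u v : ℓ¹, ∃ i, ‖u - v‖ / (1 + ε) ≤ φ i u - φ i v) {x y : ℓ¹} {a b : ℕ}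
    (hab : a ≠ b) (ha : |(x - y) a| ≤ ε * ‖x - y‖) (hb : |(x - y) b| ≤ ε * ‖x - y‖) :
    ∃ i, ‖x - y‖ * (1 - 7 * ε) ≤ φ i x - φ i y ∧
      ‖x - y‖ * (1 / 2 - 7 * ε) ≤ φ i (x - lp.single 1 b (‖x - y‖ / 2)) - φ i x ∧
      ‖x - y‖ * (1 / 2 - 7 * ε) ≤ φ i y - φ i (y - lp.single 1 a (‖x - y‖ / 2)) := by
  set d := ‖x - y‖
  set p : ℓ¹ := lp.single 1 a (d / 2)
  set q : ℓ¹ := lp.single 1 b (d / 2)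
  have hd : 0 ≤ d := norm_nonneg _
  have hp : ‖p‖ = d / 2 := by simp [p, lp.norm_single, abs_of_nonneg hd]
  have hq : ‖q‖ = d / 2 := by simp [q, lp.norm_single, abs_of_nonneg hd]
  have huv : (x + p - q) - (y - p + q) = (x - y) + lp.single 1 a d + lp.single 1 b (-d) := by
    rw [lp.single_neg, ← add_halves d, lp.single_add, lp.single_add]
    abel
  have hlong : 3 * d - 4 * ε * d ≤ ‖(x + p - q) - (y - p + q)‖ := by
    have := ell1_le_norm_add_single_add_single (x - y) hab d (-d)
    rw [abs_neg, abs_of_nonneg hd] at this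
    rw [huv]
    linarith
  obtain ⟨i, hi⟩ := hnorm (x + p - q) (y - p + q)
  have hrise : d + 2 * (‖p‖ + ‖q‖) - 7 * ε * d ≤ φ i (x + p - q) - φ i (y - p + q) :=
    calc d + 2 * (‖p‖ + ‖q‖) - 7 * ε * d = 3 * d - 7 * ε * d := by rw [hp, hq]; ring
      _ ≤ (3 * d - 4 * ε * d) / (1 + ε) := by
        rw [le_div_iff₀ (by linarith)]
        nlinarith [mul_nonneg (mul_nonneg hε hε) hd]
      _ ≤ ‖(x + p - q) - (y - p + q)‖ / (1 + ε) := by gcongr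
      _ ≤ _ := hi
  obtain ⟨h₁, h₂, h₃⟩ := (hφ i).almost_maximal_steps hrise
  rw [hq] at h₂
  rw [hp] at h₃
  exact ⟨i, by linarith, by linarith, by linarith⟩

theorem infinite_setOf_almost_norming (hφ : ∀ i, LipschitzWith 1 (φ i)) (hε₀ : 0 < ε)
    (hε : ε < 1 / 21) (hnorm : ∀ u v : ℓ¹, ∃ i, ‖u - v‖ / (1 + ε) ≤ φ i u - φ i v)
    {x y : ℓ¹} (hxy : x ≠ y) :
    {i | ‖x - y‖ * (1 - 7 * ε) ≤ φ i x - φ i y}.Infinite := by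
  intro hS
  have hd : 0 < ‖x - y‖ := norm_sub_pos_iff.2 hxy
  set G := {j : ℕ | |(x - y) j| ≤ ε * ‖x - y‖}
  have hG : G.Infinite := by
    refine infinite_of_finite_compl ?_
    have hsmall : ∀ᶠ j in cofinite, |(x - y) j| ≤ ε * ‖x - y‖ := by
      simpa [Real.norm_eq_abs] using
        ((lp.memℓp (x - y)).summable (by norm_num)).tendsto_cofinite_zero.eventually
          (Iic_mem_nhds (show 0 < ε * ‖x - y‖ by positivity))
    exact eventually_cofinite.1 hsmall
  have := hS.to_subtype
  have := hG.to_subtype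
  let rising : G → Set {i | ‖x - y‖ * (1 - 7 * ε) ≤ φ i x - φ i y} := fun a =>
    {i | ‖x - y‖ * (1 / 2 - 7 * ε) ≤ φ i y - φ i (y - lp.single 1 (a : ℕ) (‖x - y‖ / 2))}
  obtain ⟨a, b, hab, hrising⟩ := Finite.exists_ne_map_eq_of_infinite rising
  obtain ⟨i, hxy_i, hx_b, hy_a⟩ :=
    exists_almost_maximal_steps hφ hε₀.le hnorm (Subtype.coe_injective.ne hab) a.2 b.2
  -- `φ i` climbs along `e_a` up to `y`, so it lies in `rising a = rising b`.
  have hy_b : ‖x - y‖ * (1 / 2 - 7 * ε) ≤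
      φ i y - φ i (y - lp.single 1 (b : ℕ) (‖x - y‖ / 2)) :=
    (hrising ▸ hy_a : (⟨i, hxy_i⟩ : {i | ‖x - y‖ * (1 - 7 * ε) ≤ φ i x - φ i y}) ∈ rising b)
  have hlip := (hφ i).sub_le_norm_sub (x - lp.single 1 (b : ℕ) (‖x - y‖ / 2))
    (y - lp.single 1 (b : ℕ) (‖x - y‖ / 2))
  rw [sub_sub_sub_cancel_right] at hlip
  linarith [mul_pos hd (show 0 < 1 - 21 * ε by linarith)]

end AlmostNorming

namespace ContinuousMap

variable {A B E : Type*} [TopologicalSpace A] [CompactSpace A] [TopologicalSpace B]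
  [CompactSpace B] [SeminormedAddCommGroup E]

theorem norm_comp_le (h : C(A, E)) (π : C(B, A)) : ‖h.comp π‖ ≤ ‖h‖ :=
  (norm_le _ (norm_nonneg _)).2 fun b => h.norm_coe_le_norm (π b)

theorem norm_comp_of_surjective (h : C(A, E)) {π : C(B, A)} (hπ : Function.Surjective π) :
    ‖h.comp π‖ = ‖h‖ := by
  refine (norm_comp_le h π).antisymm ((norm_le _ (norm_nonneg _)).2 fun a => ?_)
  obtain ⟨b, rfl⟩ := hπ a
  exact (h.comp π).norm_coe_le_norm b

end ContinuousMap

theorem infinite_setOf_le_abs_sub {A : Type*} [TopologicalSpace A] [CompactSpace A] {ε : ℝ}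
    (hε₀ : 0 < ε) (hε : ε < 1 / 21) {f : ℓ¹ → C(A, ℝ)}
    (hf : ∀ x y, ‖x - y‖ / (1 + ε) ≤ ‖f x - f y‖ ∧ ‖f x - f y‖ ≤ ‖x - y‖) {x y : ℓ¹}
    (hxy : x ≠ y) : {k | ‖x - y‖ * (1 - 7 * ε) ≤ |f x k - f y k|}.Infinite := by
  have : Nonempty A := by
    by_contra hA
    rw [not_nonempty_iff] at hA
    have h0 : ‖f x - f y‖ ≤ 0 := (ContinuousMap.norm_le _ le_rfl).2 fun k => isEmptyElim k
    have := (hf x y).1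
    have : 0 < ‖x - y‖ / (1 + ε) := div_pos (norm_sub_pos_iff.2 hxy) (by linarith)
    linarith
  let φ : A × Bool → ℓ¹ → ℝ := fun p w => if p.2 then f w p.1 else -f w p.1
  have hφ : ∀ p, LipschitzWith 1 (φ p) := by
    rintro ⟨k, s⟩
    refine LipschitzWith.of_dist_le_mul fun u v => ?_
    have hk : dist (f u k) (f v k) ≤ dist u v :=
      (ContinuousMap.dist_apply_le_dist k).trans (by simpa [dist_eq_norm] using (hf u v).2)
    cases s <;> simpa [φ, dist_neg_neg] using hk
  have hnorm : ∀ u v : ℓ¹, ∃ p, ‖u - v‖ / (1 + ε) ≤ φ p u - φ p v := by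
    intro u v
    obtain ⟨k, -, hk⟩ :=
      isCompact_univ.exists_isMaxOn univ_nonempty (f u - f v).continuous.norm.continuousOn
    have hsup : ‖u - v‖ / (1 + ε) ≤ |f u k - f v k| :=
      (hf u v).1.trans ((ContinuousMap.norm_le_of_nonempty _).2 fun k' => hk (mem_univ k'))
    rcases le_total 0 (f u k - f v k) with hk₀ | hk₀
    · exact ⟨(k, true), by simpa [φ, abs_of_nonneg hk₀] using hsup⟩
    · refine ⟨(k, false), ?_⟩
      rw [abs_of_nonpos hk₀] at hsup
      simp only [φ, Bool.false_eq_true, ↓reduceIte]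
      linarith
  intro hT
  refine infinite_setOf_almost_norming hφ hε₀ hε hnorm hxy ((hT.prod finite_univ).subset ?_)
  rintro ⟨k, s⟩ (hks : _ ≤ φ (k, s) x - φ (k, s) y)
  refine ⟨hks.trans ?_, mem_univ s⟩
  cases s <;> simp only [φ, Bool.false_eq_true, ↓reduceIte] <;>
    linarith [neg_le_abs (f x k - f y k), le_abs_self (f x k - f y k)]

theorem exists_mem_derivedSet_of_infinite {X : Type*} [TopologicalSpace X] {A : Set X}
    {T : Set A} (hT : IsCompact T) (hinf : T.Infinite) : ∃ k ∈ T, (k : X) ∈ derivedSet A := by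
  obtain ⟨_, ⟨k, hk, rfl⟩, hacc⟩ := (hinf.image Subtype.val_injective.injOn)
    |>.exists_accPt_of_subset_isCompact (hT.image continuous_subtype_val) subset_rfl
  exact ⟨k, hk, derivedSet_mono _ _ (Subtype.coe_image_subset A T) (mem_derivedSet.2 hacc)⟩

theorem exists_almost_isometry_derivedSet {X : Type*} [TopologicalSpace X] {A : Set X}
    (hA : IsClosed A) [CompactSpace A] [CompactSpace (derivedSet A)] {ε : ℝ} (hε₀ : 0 < ε)
    (hε : ε < 1 / 21) (f : ℓ¹ → C(A, ℝ))
    (hf : ∀ x y, ‖x - y‖ / (1 + ε) ≤ ‖f x - f y‖ ∧ ‖f x - f y‖ ≤ ‖x - y‖) :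
    ∃ g : ℓ¹ → C(derivedSet A, ℝ), ∀ x y,
      ‖x - y‖ * (1 - 7 * ε) ≤ ‖g x - g y‖ ∧ ‖g x - g y‖ ≤ ‖x - y‖ := by
  let ι := ContinuousMap.inclusion ((isClosed_iff_derivedSet_subset A).1 hA)
  refine ⟨fun x => (f x).comp ι, fun x y => ?_⟩
  rw [← ContinuousMap.sub_comp]
  refine ⟨?_, (ContinuousMap.norm_comp_le _ _).trans (hf x y).2⟩
  rcases eq_or_ne x y with rfl | hxy
  · simp
  have hT : IsClosed {k | ‖x - y‖ * (1 - 7 * ε) ≤ |f x k - f y k|} :=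
    isClosed_le continuous_const ((f x).continuous.sub (f y).continuous).abs
  obtain ⟨k, hkT, hk⟩ :=
    exists_mem_derivedSet_of_infinite hT.isCompact (infinite_setOf_le_abs_sub hε₀ hε hf hxy)
  exact hkT.trans (((f x - f y).comp ι).norm_coe_le_norm ⟨k, hk⟩)

theorem exists_div_one_add_le_mul_one_sub {δ : ℝ} (hδ : 0 < δ) :
    ∃ ε : ℝ, 0 < ε ∧ ε < 1 / 21 ∧ ∀ t : ℝ, 0 ≤ t → t / (1 + δ) ≤ t * (1 - 7 * ε) := by
  refine ⟨δ / (21 * (1 + δ)), by positivity, ?_, fun t ht => ?_⟩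
  · rw [div_lt_div_iff₀ (by positivity) (by norm_num)]
    linarith
  · have h : 7 * (δ / (21 * (1 + δ))) * (1 + δ) = δ / 3 := by field_simp; ring
    rw [div_le_iff₀ (by positivity)]
    nlinarith

/-- If `K` is compact Hausdorff and `ℓ₁` embeds almost isometrically into `C(K)`, then for
every `n ∈ ℕ`, `ℓ₁` embeds almost isometrically into `C(K^(n))`. -/
theorem ell1_ai_embeds_C_iteratedDerivedSet
    (K : Type*) [TopologicalSpace K] [CompactSpace K] [T2Space K]
    (h : ∀ ε : ℝ, 0 < ε → ∃ f : lp (fun _ : ℕ => ℝ) 1 → C(K, ℝ),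
      ∀ x y : lp (fun _ : ℕ => ℝ) 1,
        ‖x - y‖ / (1 + ε) ≤ ‖f x - f y‖ ∧ ‖f x - f y‖ ≤ ‖x - y‖) :
    ∀ n : ℕ, ∀ ε : ℝ, 0 < ε →
      ∃ g : lp (fun _ : ℕ => ℝ) 1 → C(↥(iteratedDerivedSet K n), ℝ),
        ∀ x y : lp (fun _ : ℕ => ℝ) 1,
          ‖x - y‖ / (1 + ε) ≤ ‖g x - g y‖ ∧ ‖g x - g y‖ ≤ ‖x - y‖ := by
  intro n
  induction n with
  | zero =>
    intro ε hε
    obtain ⟨f, hf⟩ := h ε hε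
    refine ⟨fun x => (f x).comp ⟨Subtype.val, continuous_subtype_val⟩, fun x y => ?_⟩
    rw [← ContinuousMap.sub_comp,
      ContinuousMap.norm_comp_of_surjective _ fun k => ⟨⟨k, trivial⟩, rfl⟩]
    exact hf x y
  | succ n ih =>
    intro δ hδ
    have : CompactSpace (derivedSet (iteratedDerivedSet K n)) :=
      iteratedDerivedSetCompact K (n + 1)
    obtain ⟨ε, hε₀, hε, hεδ⟩ := exists_div_one_add_le_mul_one_sub hδ
    obtain ⟨f, hf⟩ := ih ε hε₀
    obtain ⟨g, hg⟩ :=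
      exists_almost_isometry_derivedSet (isClosed_iteratedDerivedSet K n) hε₀ hε f hf
    exact ⟨g, fun x y => ⟨(hεδ _ (norm_nonneg _)).trans (hg x y).1, (hg x y).2⟩⟩
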